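/- Let R be a Noetherian regular local ring of prime characteristic p > 0 satisfying condition (*), and let a be an ideal of R. If c > 0 is an F-jumping coefficient of a, then pc is also an F-jumping coefficient of a. -/

import Mathlib

/-- The `q`-th bracket power of an ideal: the ideal generated by the `q`-th powers
of the elements of `J`. -/
def bracketPow {R : Type*} [CommRing R] (J : Ideal R) (q : ℕ) : Ideal R :=
  Ideal.span ((fun x => x ^ q) '' (J : Set R))

/-- `Ie p a e` is the intersection of all ideals `I` with `a ⊆ I^{[p^e]}`. -/
def Ie {R : Type*} [CommRing R] (p : ℕ) (a : Ideal R) (e : ℕ) : Ideal R :=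
  sInf {I : Ideal R | a ≤ bracketPow I (p ^ e)}

/-- Condition (*): `a ⊆ I_e(a)^{[p^e]}` for every ideal `a` and every `e ≥ 1`. -/
def CondStar (R : Type*) [CommRing R] (p : ℕ) : Prop :=
  ∀ (a : Ideal R) (e : ℕ), 1 ≤ e → a ≤ bracketPow (Ie p a e) (p ^ e)

/-- The generalized test ideal `τ(a^c)`: the supremum, in the lattice of ideals of `R`,
of the ideals `I_e(a^{⌈c p^e⌉})` for `e ≥ 1`. -/
noncomputable def tau {R : Type*} [CommRing R] (p : ℕ) (a : Ideal R) (c : ℝ) : Ideal R :=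
  ⨆ e : {e : ℕ // 1 ≤ e}, Ie p (a ^ ⌈c * (p : ℝ) ^ (e : ℕ)⌉₊) (e : ℕ)

/-- `c > 0` is an F-jumping coefficient of `a` if `τ(a^c) ≠ τ(a^{c-ε})` for all
`0 < ε < c`. -/
def IsFJumpingCoeff {R : Type*} [CommRing R] (p : ℕ) (a : Ideal R) (c : ℝ) : Prop :=
  0 < c ∧ ∀ ε : ℝ, 0 < ε → ε < c → tau p a c ≠ tau p a (c - ε)

/-- `x` is an accumulation point of `S ⊆ ℝ`. -/
def IsAccumulationPt (S : Set ℝ) (x : ℝ) : Prop :=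
  ∀ ε : ℝ, 0 < ε → ∃ y ∈ S, y ≠ x ∧ |y - x| < ε

/-- `R` is a regular local ring: Noetherian, local, and the maximal ideal is generated
by `dim R` elements. -/
def IsRegularStmt (R : Type*) [CommRing R] [IsLocalRing R] : Prop :=
  ∃ s : Finset R, IsLocalRing.maximalIdeal R = Ideal.span (s : Set R) ∧
    (s.card : WithBot (WithTop ℕ)) = ringKrullDim R

/-!
Under condition (*), `b ↦ I_e(b)` is left adjoint to `I ↦ I^{[p^e]}`. Hence it commutes with
suprema and `I_{e+1} = I_1 ∘ I_e`, which splits off the first term of the supremum defining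
`τ(a^c)`: `τ(a^c) = I_1(a^{⌈cp⌉}) + I_1(τ(a^{pc}))`. If `τ(a^{pc})` were constant on some interval
`[pc - δ, pc]`, then for small `ε > 0` both `⌈(c - ε)p⌉ = ⌈cp⌉` and
`τ(a^{p(c-ε)}) = τ(a^{pc})`, so the formula would give `τ(a^{c-ε}) = τ(a^c)`.
-/

open Filter Topology

section FrobeniusPowers

variable {R : Type*} [CommRing R] {p : ℕ}

lemma bracketPow_mono {I J : Ideal R} (h : I ≤ J) (q : ℕ) : bracketPow I q ≤ bracketPow J q :=
  Ideal.span_mono (Set.image_mono h)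

lemma bracketPow_eq_map [ExpChar R p] (J : Ideal R) (e : ℕ) :
    bracketPow J (p ^ e) = J.map (iterateFrobenius R p e) :=
  rfl

lemma bracketPow_bracketPow [ExpChar R p] (J : Ideal R) (e f : ℕ) :
    bracketPow (bracketPow J (p ^ f)) (p ^ e) = bracketPow J (p ^ (e + f)) := by
  simp only [bracketPow_eq_map, Ideal.map_map, iterateFrobenius_add]

lemma Ie_mono {a b : Ideal R} (h : a ≤ b) (e : ℕ) : Ie p a e ≤ Ie p b e :=
  sInf_le_sInf fun _ hI => h.trans hI

lemma galoisConnection_Ie_bracketPow (hstar : CondStar R p) {e : ℕ} (he : 1 ≤ e) :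
    GaloisConnection (fun b : Ideal R => Ie p b e) (fun I => bracketPow I (p ^ e)) :=
  fun b _ => ⟨fun h => (hstar b e he).trans (bracketPow_mono h _), fun h => sInf_le h⟩

lemma Ie_add [ExpChar R p] (hstar : CondStar R p) (b : Ideal R) {e : ℕ} (he : 1 ≤ e) (f : ℕ) :
    Ie p b (e + f) = Ie p (Ie p b e) f := by
  show sInf _ = sInf {I : Ideal R | Ie p b e ≤ bracketPow I (p ^ f)}
  simp only [(galoisConnection_Ie_bracketPow hstar he).le_iff_le, bracketPow_bracketPow]

end FrobeniusPowers

section TestIdeals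

variable {R : Type*} [CommRing R] {p : ℕ}

lemma tau_antitone (a : Ideal R) : Antitone (tau p a) := fun c' c h =>
  iSup_mono fun e => Ie_mono (Ideal.pow_le_pow_right (Nat.ceil_le_ceil
    (mul_le_mul_of_nonneg_right h (by positivity)))) _

lemma tau_eq_iSup_nat (a : Ideal R) (c : ℝ) :
    tau p a c = ⨆ n : ℕ, Ie p (a ^ ⌈c * (p : ℝ) ^ (n + 1)⌉₊) (n + 1) := by
  rw [tau, iSup_subtype]
  exact iSup_ge_eq_iSup_nat_add (fun n => Ie p (a ^ ⌈c * (p : ℝ) ^ n⌉₊) n) 1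

lemma tau_eq_Ie_sup_Ie_tau_mul [ExpChar R p] (hstar : CondStar R p) (a : Ideal R) (c : ℝ) :
    tau p a c = Ie p (a ^ ⌈c * p⌉₊) 1 ⊔ Ie p (tau p a (p * c)) 1 := by
  have hshift : ∀ n : ℕ, Ie p (a ^ ⌈c * (p : ℝ) ^ (n + 1 + 1)⌉₊) (n + 1 + 1) =
      Ie p (Ie p (a ^ ⌈p * c * (p : ℝ) ^ (n + 1)⌉₊) (n + 1)) 1 := fun n => by
    rw [Ie_add hstar _ (Nat.le_add_left 1 n), pow_succ' _ (n + 1), mul_left_comm, mul_assoc]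
  rw [tau_eq_iSup_nat, ← sup_iSup_nat_succ, tau_eq_iSup_nat,
    (galoisConnection_Ie_bracketPow hstar le_rfl).l_iSup, zero_add, pow_one]
  simp only [hshift]

end TestIdeals

lemma Nat.eventually_ceil_eq_nhdsLE {α : Type*} [Field α] [LinearOrder α] [IsStrictOrderedRing α]
    [FloorRing α] [TopologicalSpace α] [OrderClosedTopology α] (x : α) :
    ∀ᶠ y in 𝓝[≤] x, ⌈y⌉₊ = ⌈x⌉₊ := by
  filter_upwards [tendsto_pure.1 (tendsto_ceil_left_pure_ceil x)] with y hy
  rw [← Int.ceil_toNat, ← Int.ceil_toNat, hy]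

lemma eventually_ceil_sub_mul_eq {c q : ℝ} (hq : 0 ≤ q) :
    ∀ᶠ ε in 𝓝[>] 0, ⌈(c - ε) * q⌉₊ = ⌈c * q⌉₊ := by
  have hlim : Tendsto (fun ε => (c - ε) * q) (𝓝[>] 0) (𝓝[≤] (c * q)) := by
    refine tendsto_nhdsWithin_iff.2 ⟨tendsto_nhdsWithin_of_tendsto_nhds ?_, ?_⟩
    · exact ((continuous_const.sub continuous_id).mul continuous_const).tendsto' 0 _ (by simp)
    · filter_upwards [self_mem_nhdsWithin] with ε (hε : 0 < ε)
      exact mul_le_mul_of_nonneg_right (by linarith) hq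
  exact hlim.eventually (Nat.eventually_ceil_eq_nhdsLE _)

theorem stmt5_general {R : Type*} [CommRing R]
    (p : ℕ) (hp : p.Prime) [CharP R p]
    (hstar : CondStar R p) (a : Ideal R)
    (c : ℝ) (h : IsFJumpingCoeff p a c) :
    IsFJumpingCoeff p a ((p : ℝ) * c) := by
  have := ExpChar.prime (R := R) hp
  obtain ⟨hc, hjump⟩ := h
  have hp0 : (0 : ℝ) < p := mod_cast hp.pos
  refine ⟨by positivity, fun δ hδ _ hτδ => ?_⟩
  have hpos : ∀ᶠ ε in 𝓝[>] (0 : ℝ), 0 < ε := self_mem_nhdsWithin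
  have hsmall : ∀ᶠ ε in 𝓝[>] (0 : ℝ), ε < c ∧ p * ε < δ :=
    nhdsWithin_le_nhds <| Filter.Eventually.and (Iio_mem_nhds hc) <|
      (continuous_const.mul continuous_id).tendsto' 0 0 (by simp) |>.eventually (Iio_mem_nhds hδ)
  obtain ⟨ε, ⟨hε, hεc, hεδ⟩, hceil⟩ :=
    ((hpos.and hsmall).and (eventually_ceil_sub_mul_eq hp0.le)).exists
  have hτ : tau p a (p * (c - ε)) = tau p a (p * c) :=
    le_antisymm ((tau_antitone a (by linarith)).trans hτδ.ge) (tau_antitone a (by nlinarith))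
  apply hjump ε hε hεc
  rw [tau_eq_Ie_sup_Ie_tau_mul hstar, tau_eq_Ie_sup_Ie_tau_mul hstar a (c - ε), hceil, hτ]

/-- If `c` is an F-jumping coefficient of `a`, then so is `pc`. -/
theorem stmt5 {R : Type*} [CommRing R] [IsNoetherianRing R] [IsLocalRing R]
    (p : ℕ) (hp : p.Prime) [CharP R p]
    (hreg : IsRegularStmt R) (hstar : CondStar R p) (a : Ideal R)
    (c : ℝ) (h : IsFJumpingCoeff p a c) :
    IsFJumpingCoeff p a ((p : ℝ) * c) :=
  stmt5_general p hp hstar a c h
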